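/- For every integer p ≥ 1 there exists a constant C (depending only on p and κ_ψ) such that for all x ∈ ℝ: E[ |1/ψ̃_Δ(x) − 1/ψ_Δ(x)|^{2p} ] ≤ C ( |ψ_Δ(x)|^{−2p} ∧ n^{−p} |ψ_Δ(x)|^{−4p} ). -/

import Mathlib

/-!
The deviation `δ = ‖ψ̂(x) - ψ(x)‖` of the empirical characteristic function is an average of `n`
independent centred variables bounded by `2`, so by Hoeffding's lemma its real and imaginary parts
are sub-Gaussian with variance proxy `1/n`, whence `E δ^{2q} ≲ n^{-q}`.

Deterministically, with `τ = κψ/√n` we always have `‖1/ψ̃ - 1/ψ‖ ≤ 1/τ + 1/‖ψ‖`, which is of order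
`1/‖ψ‖` when `‖ψ‖ ≤ 2τ`. When `‖ψ‖ > 2τ`, `‖1/ψ̃ - 1/ψ‖ ≤ 2‖ψ‖⁻² (δ + δ²/τ)`: for `δ ≤ ‖ψ‖/2` we
have `‖ψ̂‖ ≥ ‖ψ‖/2`; for `δ > ‖ψ‖/2` either `‖ψ̂‖ > τ`, so `1/‖ψ̂‖ < 1/τ < 2δ/(τ‖ψ‖)`, or
`1/ψ̃ = 0` and `1/‖ψ‖ < 2δ/‖ψ‖²`. Taking moments gives `n^{-p}‖ψ‖^{-4p}`. The threshold
`n‖ψ‖² = 4κψ²` between the two regimes is where the two terms of the minimum agree up to constants.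
-/

open MeasureTheory ProbabilityTheory Real
open scoped NNReal Nat

variable {Ω : Type*} [MeasurableSpace Ω] {μ : Measure Ω}

lemma Real.pow_two_mul_le_factorial_mul_exp_add_exp (y : ℝ) (k : ℕ) :
    y ^ (2 * k) ≤ (2 * k)! * (exp y + exp (-y)) := by
  have h := Real.pow_div_factorial_le_exp _ (abs_nonneg y) (2 * k)
  rw [div_le_iff₀ (by positivity), pow_mul, sq_abs, ← pow_mul] at h
  have : exp |y| ≤ exp y + exp (-y) := by
    rcases abs_cases y with ⟨hy, -⟩ | ⟨hy, -⟩ <;> rw [hy] <;> linarith [exp_pos y, exp_pos (-y)]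
  nlinarith [(Nat.cast_pos (α := ℝ)).2 (Nat.factorial_pos (2 * k))]

lemma Complex.norm_pow_two_mul_le (z : ℂ) (k : ℕ) :
    ‖z‖ ^ (2 * k) ≤ 2 ^ k * (z.re ^ (2 * k) + z.im ^ (2 * k)) :=
  calc ‖z‖ ^ (2 * k) = (z.re ^ 2 + z.im ^ 2) ^ k := by
        rw [pow_mul, Complex.sq_norm, Complex.normSq_apply]; ring
    _ ≤ 2 ^ (k - 1) * ((z.re ^ 2) ^ k + (z.im ^ 2) ^ k) := add_pow_le (sq_nonneg _) (sq_nonneg _) k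
    _ ≤ 2 ^ k * (z.re ^ (2 * k) + z.im ^ (2 * k)) := by
        rw [← pow_mul, ← pow_mul]
        have := add_nonneg ((even_two_mul k).pow_nonneg z.re) ((even_two_mul k).pow_nonneg z.im)
        gcongr
        exacts [one_le_two, k.sub_le 1]

namespace ProbabilityTheory

lemma HasSubgaussianMGF.integral_pow_two_mul_le {X : Ω → ℝ} {c : ℝ≥0}
    (h : HasSubgaussianMGF X c μ) (hc : 0 < c) (k : ℕ) :
    ∫ ω, X ω ^ (2 * k) ∂μ ≤ 2 * exp (1 / 2) * (2 * k)! * c ^ k := by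
  set t : ℝ := (√(c : ℝ))⁻¹
  have hct : (c : ℝ) * t ^ 2 = 1 := by
    simp only [t, inv_pow, sq_sqrt c.coe_nonneg]; exact mul_inv_cancel₀ (by positivity)
  have hpt (x : ℝ) : x ^ (2 * k) ≤ c ^ k * ((2 * k)! * (exp (t * x) + exp (-t * x))) := by
    calc x ^ (2 * k) = c ^ k * (t * x) ^ (2 * k) := by
          rw [mul_pow, pow_mul t, ← mul_assoc, ← mul_pow, hct, one_pow, one_mul]
      _ ≤ _ := by
          rw [neg_mul]; gcongr; exact pow_two_mul_le_factorial_mul_exp_add_exp _ k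
  calc ∫ ω, X ω ^ (2 * k) ∂μ
      ≤ ∫ ω, c ^ k * ((2 * k)! * (exp (t * X ω) + exp (-t * X ω))) ∂μ :=
        integral_mono_of_nonneg (ae_of_all _ fun ω => even_two_mul k |>.pow_nonneg _)
          ((((h.integrable_exp_mul t).add (h.integrable_exp_mul (-t))).const_mul _).const_mul _)
          (ae_of_all _ fun ω => hpt (X ω))
    _ = c ^ k * ((2 * k)! * (mgf X μ t + mgf X μ (-t))) := by
        rw [integral_const_mul, integral_const_mul,
          integral_add (h.integrable_exp_mul t) (h.integrable_exp_mul (-t))]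
        rfl
    _ ≤ c ^ k * ((2 * k)! * (exp (c * t ^ 2 / 2) + exp (c * (-t) ^ 2 / 2))) := by
        gcongr <;> exact h.mgf_le _
    _ = 2 * exp (1 / 2) * (2 * k)! * c ^ k := by
        rw [neg_sq, hct]; ring

lemma iIndepFun.hasSubgaussianMGF_sum_sub_integral [IsProbabilityMeasure μ]
    {ι : Type*} [Fintype ι] {X : ι → Ω → ℝ} (hind : iIndepFun X μ)
    (hX : ∀ i, Measurable (X i)) (hb : ∀ i, ∀ᵐ ω ∂μ, X i ω ∈ Set.Icc (-1) 1) :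
    HasSubgaussianMGF (fun ω => ∑ i, (X i ω - μ[X i])) (Fintype.card ι) μ := by
  have hsub : ∀ i, HasSubgaussianMGF (fun ω => X i ω - μ[X i]) 1 μ := fun i => by
    convert hasSubgaussianMGF_of_mem_Icc (hX i).aemeasurable (hb i)
    rw [sub_neg_eq_add, one_add_one_eq_two, Real.nnnorm_ofNat, div_self two_ne_zero, one_pow]
  simpa using HasSubgaussianMGF.sum_of_iIndepFun (s := .univ) (c := fun _ => 1)
    (hind.comp (fun i (y : ℝ) => y - ∫ ω, X i ω ∂μ) fun i => measurable_id.sub_const _)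
    fun i _ => hsub i

lemma HasSubgaussianMGF.integrable_pow {X : Ω → ℝ} {c : ℝ≥0} (h : HasSubgaussianMGF X c μ)
    (m : ℕ) : Integrable (fun ω => X ω ^ m) μ := by
  simpa using integrable_pow_of_integrable_exp_mul one_ne_zero (h.integrable_exp_mul 1)
    (h.integrable_exp_mul (-1)) m

lemma iIndepFun.hasSubgaussianMGF_map_sum_sub_integral [IsProbabilityMeasure μ]
    {ι : Type*} [Fintype ι] {W : ι → Ω → ℂ} (hind : iIndepFun W μ)
    (hW : ∀ i, Measurable (W i)) (hb : ∀ i ω, ‖W i ω‖ ≤ 1) (L : ℂ →L[ℝ] ℝ)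
    (hL : ∀ z, |L z| ≤ ‖z‖) :
    HasSubgaussianMGF (fun ω => L (∑ i, (W i ω - μ[W i]))) (Fintype.card ι) μ := by
  convert (hind.comp (fun _ => L) fun _ => L.measurable).hasSubgaussianMGF_sum_sub_integral
    (fun i => L.measurable.comp (hW i))
    (fun i => ae_of_all _ fun ω => abs_le.1 ((hL _).trans (hb i ω))) using 2 with ω
  simp only [map_sum, map_sub, Function.comp_apply]
  congr! 2 with i
  exact (L.integral_comp_comm (Integrable.of_bound (hW i).aestronglyMeasurable 1
    (ae_of_all _ (hb i)))).symm

lemma iIndepFun.integral_norm_sum_sub_integral_pow_le [IsProbabilityMeasure μ]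
    {ι : Type*} [Fintype ι] [Nonempty ι] {W : ι → Ω → ℂ} (hind : iIndepFun W μ)
    (hW : ∀ i, Measurable (W i)) (hb : ∀ i ω, ‖W i ω‖ ≤ 1) (k : ℕ) :
    ∫ ω, ‖∑ i, (W i ω - μ[W i])‖ ^ (2 * k) ∂μ
      ≤ 2 ^ (k + 2) * exp (1 / 2) * (2 * k)! * Fintype.card ι ^ k := by
  set S := fun ω => ∑ i, (W i ω - μ[W i])
  have hre : HasSubgaussianMGF (fun ω => (S ω).re) (Fintype.card ι) μ :=
    hind.hasSubgaussianMGF_map_sum_sub_integral hW hb Complex.reCLM Complex.abs_re_le_norm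
  have him : HasSubgaussianMGF (fun ω => (S ω).im) (Fintype.card ι) μ :=
    hind.hasSubgaussianMGF_map_sum_sub_integral hW hb Complex.imCLM Complex.abs_im_le_norm
  have hcard : (0 : ℝ≥0) < Fintype.card ι := by simp [Fintype.card_pos]
  calc ∫ ω, ‖S ω‖ ^ (2 * k) ∂μ
      ≤ ∫ ω, 2 ^ k * ((S ω).re ^ (2 * k) + (S ω).im ^ (2 * k)) ∂μ :=
        integral_mono_of_nonneg (ae_of_all _ fun ω => by positivity)
          (((hre.integrable_pow _).add (him.integrable_pow _)).const_mul _)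
          (ae_of_all _ fun ω => (S ω).norm_pow_two_mul_le k)
    _ ≤ 2 ^ k * (2 * exp (1 / 2) * (2 * k)! * Fintype.card ι ^ k
          + 2 * exp (1 / 2) * (2 * k)! * Fintype.card ι ^ k) := by
        rw [integral_const_mul, integral_add (hre.integrable_pow _) (him.integrable_pow _)]
        gcongr
        · simpa using hre.integral_pow_two_mul_le hcard k
        · simpa using him.integral_pow_two_mul_le hcard k
    _ = _ := by ring

lemma iIndepFun.integral_norm_average_sub_pow_le [IsProbabilityMeasure μ]
    {ι : Type*} [Fintype ι] [Nonempty ι] {W : ι → Ω → ℂ} (hind : iIndepFun W μ)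
    (hW : ∀ i, Measurable (W i)) (hb : ∀ i ω, ‖W i ω‖ ≤ 1) {c : ℂ} (hc : ∀ i, μ[W i] = c)
    (k : ℕ) :
    ∫ ω, ‖(Fintype.card ι : ℂ)⁻¹ * ∑ i, W i ω - c‖ ^ (2 * k) ∂μ
      ≤ 2 ^ (k + 2) * exp (1 / 2) * (2 * k)! / Fintype.card ι ^ k := by
  have hpt (ω : Ω) : ‖(Fintype.card ι : ℂ)⁻¹ * ∑ i, W i ω - c‖ ^ (2 * k)
      = ((Fintype.card ι : ℝ) ^ (2 * k))⁻¹ * ‖∑ i, (W i ω - μ[W i])‖ ^ (2 * k) := by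
    have : (Fintype.card ι : ℂ)⁻¹ * ∑ i, W i ω - c
        = (Fintype.card ι : ℂ)⁻¹ * ∑ i, (W i ω - μ[W i]) := by
      simp only [hc, Finset.sum_sub_distrib, Finset.sum_const, Finset.card_univ, nsmul_eq_mul]
      field_simp
    rw [this, norm_mul, mul_pow, norm_inv, Complex.norm_natCast, inv_pow]
  simp_rw [hpt, integral_const_mul]
  calc _ ≤ ((Fintype.card ι : ℝ) ^ (2 * k))⁻¹
        * (2 ^ (k + 2) * exp (1 / 2) * (2 * k)! * Fintype.card ι ^ k) := by
        gcongr; exact hind.integral_norm_sum_sub_integral_pow_le hW hb k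
    _ = _ := by
        field_simp
        ring

end ProbabilityTheory

lemma integrable_norm_average_sub_pow [IsProbabilityMeasure μ] {ι : Type*} [Fintype ι]
    [Nonempty ι] {W : ι → Ω → ℂ} (hW : ∀ i, Measurable (W i)) (hb : ∀ i ω, ‖W i ω‖ ≤ 1)
    {c : ℂ} (hc : ∀ i, μ[W i] = c) (m : ℕ) :
    Integrable (fun ω => ‖(Fintype.card ι : ℂ)⁻¹ * ∑ i, W i ω - c‖ ^ m) μ := by
  obtain ⟨i₀⟩ := ‹Nonempty ι›
  have hc1 : ‖c‖ ≤ 1 := by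
    simpa [← hc i₀] using norm_integral_le_of_norm_le_const (μ := μ) (ae_of_all _ (hb i₀))
  refine Integrable.of_bound (by fun_prop) (2 ^ m) (ae_of_all _ fun ω => ?_)
  have havg : ‖(Fintype.card ι : ℂ)⁻¹ * ∑ i, W i ω‖ ≤ 1 := by
    rw [norm_mul, norm_inv, Complex.norm_natCast]
    calc (Fintype.card ι : ℝ)⁻¹ * ‖∑ i, W i ω‖ ≤ (Fintype.card ι : ℝ)⁻¹ * ∑ _i : ι, 1 := by
          gcongr; exact norm_sum_le_of_le _ fun i _ => hb i ω
      _ ≤ 1 := by simp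
  rw [norm_pow, norm_norm]
  exact pow_le_pow_left₀ (norm_nonneg _) ((norm_sub_le _ _).trans (by linarith)) m

lemma norm_cexp_I_mul_ofReal_mul_ofReal_le_one (x z : ℝ) :
    ‖Complex.exp (Complex.I * x * z)‖ ≤ 1 := by
  simp [Complex.norm_exp]

section EmpiricalCharFun

variable [IsProbabilityMeasure μ] {n : ℕ} [NeZero n] {Z : Fin n → Ω → ℝ} {x : ℝ} {c : ℂ}

lemma integrable_norm_ecf_sub_pow (hZ : ∀ k, Measurable (Z k))
    (hc : ∀ k, ∫ ω, Complex.exp (Complex.I * x * Z k ω) ∂μ = c) (m : ℕ) :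
    Integrable (fun ω => ‖(n : ℂ)⁻¹ * ∑ k, Complex.exp (Complex.I * x * Z k ω) - c‖ ^ m) μ := by
  simpa using integrable_norm_average_sub_pow (fun k => by fun_prop)
    (fun k ω => norm_cexp_I_mul_ofReal_mul_ofReal_le_one x (Z k ω)) hc m

lemma integral_norm_ecf_sub_pow_le (hZ : ∀ k, Measurable (Z k)) (hind : iIndepFun Z μ)
    (hc : ∀ k, ∫ ω, Complex.exp (Complex.I * x * Z k ω) ∂μ = c) (q : ℕ) :
    ∫ ω, ‖(n : ℂ)⁻¹ * ∑ k, Complex.exp (Complex.I * x * Z k ω) - c‖ ^ (2 * q) ∂μ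
      ≤ 2 ^ (q + 2) * exp (1 / 2) * (2 * q)! / n ^ q := by
  simpa using (hind.comp (fun _ (z : ℝ) => Complex.exp (Complex.I * x * z)) fun k => by fun_prop)
    |>.integral_norm_average_sub_pow_le (fun k => by fun_prop)
      (fun k ω => norm_cexp_I_mul_ofReal_mul_ofReal_le_one x (Z k ω)) hc q

end EmpiricalCharFun

lemma le_max_mul_min_of_le_mul {a b L : ℝ} (ha : 0 ≤ a) (hb : 0 ≤ b) (h : a ≤ L * b) :
    a ≤ max 1 L * min a b := by
  rcases min_cases a b with ⟨hm, -⟩ | ⟨hm, -⟩ <;> rw [hm]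
  · exact le_mul_of_one_le_left ha (le_max_left _ _)
  · exact h.trans (mul_le_mul_of_nonneg_right (le_max_right _ _) hb)

lemma le_two_mul_div_sqrt_iff {r κ n : ℝ} (hr : 0 ≤ r) (hκ : 0 ≤ κ) (hn : 0 < n) :
    r ≤ 2 * (κ / √n) ↔ n * r ^ 2 ≤ 4 * κ ^ 2 := by
  rw [← sq_le_sq₀ hr (by positivity), mul_pow, div_pow, sq_sqrt hn.le, mul_div_assoc',
    le_div_iff₀ hn, mul_comm]
  norm_num

lemma le_mul_min_of_regimes {X r n L K₁ K₂ : ℝ} {p : ℕ} (hr : 0 < r) (hn : 0 < n) (hL : 0 < L)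
    (hK₁ : 0 ≤ K₁) (hK₂ : 0 ≤ K₂)
    (h₁ : n * r ^ 2 ≤ L → X ≤ K₁ * (r ^ (2 * p))⁻¹)
    (h₂ : L < n * r ^ 2 → X ≤ K₂ * ((n ^ p)⁻¹ * (r ^ (4 * p))⁻¹)) :
    X ≤ max (K₁ * max 1 (L ^ p)) (K₂ * max 1 (L ^ p)⁻¹)
      * min (r ^ (2 * p))⁻¹ ((n ^ p)⁻¹ * (r ^ (4 * p))⁻¹) := by
  have hba : (n ^ p)⁻¹ * (r ^ (4 * p))⁻¹ = ((n * r ^ 2) ^ p)⁻¹ * (r ^ (2 * p))⁻¹ := by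
    rw [← mul_inv, ← mul_inv, mul_pow, mul_assoc, ← pow_mul, ← pow_add]; ring_nf
  rcases le_or_gt (n * r ^ 2) L with hsmall | hlarge
  · refine (h₁ hsmall).trans ?_
    calc K₁ * (r ^ (2 * p))⁻¹
        ≤ K₁ * (max 1 (L ^ p) * min (r ^ (2 * p))⁻¹ ((n ^ p)⁻¹ * (r ^ (4 * p))⁻¹)) := by
          gcongr K₁ * ?_
          refine le_max_mul_min_of_le_mul (by positivity) (by positivity) ?_
          rw [hba, ← mul_assoc]
          refine le_mul_of_one_le_left (by positivity) ?_
          rw [← div_eq_mul_inv, one_le_div (by positivity)]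
          exact pow_le_pow_left₀ (by positivity) hsmall p
      _ ≤ _ := by rw [← mul_assoc]; gcongr; exact le_max_left _ _
  · refine (h₂ hlarge).trans ?_
    calc K₂ * ((n ^ p)⁻¹ * (r ^ (4 * p))⁻¹)
        ≤ K₂ * (max 1 (L ^ p)⁻¹ * min (r ^ (2 * p))⁻¹ ((n ^ p)⁻¹ * (r ^ (4 * p))⁻¹)) := by
          gcongr K₂ * ?_
          rw [min_comm]
          refine le_max_mul_min_of_le_mul (by positivity) (by positivity) ?_
          rw [hba]
          gcongr
      _ ≤ _ := by rw [← mul_assoc]; gcongr; exact le_max_right _ _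

/-- `truncInv (κψ / √n)` is the paper's `1 / ψ̃`; the integrand of `stmt_2` is
`‖truncInv (κψ / √n) ψ̂(x) - (ψ x)⁻¹‖ ^ (2 * p)` by definition. -/
noncomputable def truncInv (τ : ℝ) (z : ℂ) : ℂ := if τ < ‖z‖ then z⁻¹ else 0

section truncInv

variable {τ : ℝ} {c : ℂ}

lemma norm_truncInv_sub_inv_le (hτ : 0 < τ) (z c : ℂ) :
    ‖truncInv τ z - c⁻¹‖ ≤ τ⁻¹ + ‖c‖⁻¹ := by
  unfold truncInv
  split_ifs with hz
  · calc ‖z⁻¹ - c⁻¹‖ ≤ ‖z‖⁻¹ + ‖c‖⁻¹ := by simpa using norm_sub_le z⁻¹ c⁻¹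
      _ ≤ τ⁻¹ + ‖c‖⁻¹ := by gcongr
  · simpa using inv_nonneg.2 hτ.le

lemma norm_truncInv_sub_inv_le_of_two_mul_lt (hτ : 0 < τ) (hc : 2 * τ < ‖c‖) (z : ℂ) :
    ‖truncInv τ z - c⁻¹‖ ≤ 2 / ‖c‖ ^ 2 * (‖z - c‖ + ‖z - c‖ ^ 2 / τ) := by
  have hr : 0 < ‖c‖ := by linarith
  have hδ : ‖c‖ ≤ ‖z‖ + ‖z - c‖ := by simpa [norm_sub_rev] using norm_le_norm_add_norm_sub' c z
  unfold truncInv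
  split_ifs with hz
  · have hz0 : z ≠ 0 := norm_pos_iff.1 (hτ.trans hz)
    have hrw : ‖z⁻¹ - c⁻¹‖ = ‖z - c‖ / (‖z‖ * ‖c‖) := by
      rw [inv_sub_inv hz0 (norm_pos_iff.1 hr), norm_div, norm_mul, norm_sub_rev]
    rw [hrw, div_le_iff₀ (by positivity)]
    rcases le_or_gt (2 * ‖z - c‖) ‖c‖ with hsmall | hlarge
    · calc ‖z - c‖ ≤ ‖z - c‖ * (2 * ‖z‖ / ‖c‖) :=
            le_mul_of_one_le_right (norm_nonneg _) ((one_le_div hr).2 (by linarith))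
        _ = 2 / ‖c‖ ^ 2 * ‖z - c‖ * (‖z‖ * ‖c‖) := by field_simp
        _ ≤ _ := by gcongr; exact le_add_of_nonneg_right (by positivity)
    · calc ‖z - c‖ ≤ ‖z - c‖ * (2 * ‖z - c‖ / ‖c‖ * (‖z‖ / τ)) :=
            le_mul_of_one_le_right (norm_nonneg _) (one_le_mul_of_one_le_of_one_le
              ((one_le_div hr).2 hlarge.le) ((one_le_div hτ).2 hz.le))
        _ = 2 / ‖c‖ ^ 2 * (‖z - c‖ ^ 2 / τ) * (‖z‖ * ‖c‖) := by field_simp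
        _ ≤ _ := by gcongr; exact le_add_of_nonneg_left (norm_nonneg _)
  · rw [zero_sub, norm_neg, norm_inv]
    calc ‖c‖⁻¹ ≤ 2 / ‖c‖ ^ 2 * ‖z - c‖ := by
          rw [div_mul_eq_mul_div, le_div_iff₀ (by positivity), sq, inv_mul_cancel_left₀ hr.ne']
          linarith
      _ ≤ _ := by gcongr; exact le_add_of_nonneg_right (by positivity)

lemma integral_norm_truncInv_sub_inv_pow_le_of_le [IsProbabilityMeasure μ] (hτ : 0 < τ)
    (hc0 : c ≠ 0) (hc : ‖c‖ ≤ 2 * τ) (E : Ω → ℂ) (p : ℕ) :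
    ∫ ω, ‖truncInv τ (E ω) - c⁻¹‖ ^ p ∂μ ≤ (3 / ‖c‖) ^ p := by
  have hr : 0 < ‖c‖ := norm_pos_iff.2 hc0
  have hbound : τ⁻¹ + ‖c‖⁻¹ ≤ 3 / ‖c‖ := by
    have : τ⁻¹ ≤ 2 / ‖c‖ := by rw [inv_le_comm₀ hτ (by positivity), inv_div]; linarith
    linarith [show 3 / ‖c‖ = 2 / ‖c‖ + ‖c‖⁻¹ by ring]
  calc ∫ ω, ‖truncInv τ (E ω) - c⁻¹‖ ^ p ∂μ
      ≤ ‖∫ ω, ‖truncInv τ (E ω) - c⁻¹‖ ^ p ∂μ‖ := le_norm_self _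
    _ ≤ (3 / ‖c‖) ^ p := by
        simpa using norm_integral_le_of_norm_le_const (μ := μ) (C := (3 / ‖c‖) ^ p)
          (f := fun ω => ‖truncInv τ (E ω) - c⁻¹‖ ^ p) (ae_of_all _ fun ω => by
            rw [norm_pow, norm_norm]
            exact pow_le_pow_left₀ (norm_nonneg _)
              ((norm_truncInv_sub_inv_le hτ (E ω) c).trans hbound) p)

lemma integral_norm_truncInv_sub_inv_pow_le_of_two_mul_lt (hτ : 0 < τ) (hc : 2 * τ < ‖c‖)
    {E : Ω → ℂ} {p : ℕ} {M₁ M₂ : ℝ} (hi₁ : Integrable (fun ω => ‖E ω - c‖ ^ p) μ)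
    (hi₂ : Integrable (fun ω => ‖E ω - c‖ ^ (2 * p)) μ) (h₁ : ∫ ω, ‖E ω - c‖ ^ p ∂μ ≤ M₁)
    (h₂ : ∫ ω, ‖E ω - c‖ ^ (2 * p) ∂μ ≤ M₂) :
    ∫ ω, ‖truncInv τ (E ω) - c⁻¹‖ ^ p ∂μ ≤ (4 / ‖c‖ ^ 2) ^ p * (M₁ + M₂ / τ ^ p) := by
  have hpt (z : ℂ) : ‖truncInv τ z - c⁻¹‖ ^ p
      ≤ (4 / ‖c‖ ^ 2) ^ p * (‖z - c‖ ^ p + ‖z - c‖ ^ (2 * p) / τ ^ p) := by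
    calc ‖truncInv τ z - c⁻¹‖ ^ p ≤ (2 / ‖c‖ ^ 2 * (‖z - c‖ + ‖z - c‖ ^ 2 / τ)) ^ p :=
          pow_le_pow_left₀ (norm_nonneg _) (norm_truncInv_sub_inv_le_of_two_mul_lt hτ hc z) p
      _ ≤ (2 / ‖c‖ ^ 2) ^ p * (2 ^ (p - 1) * (‖z - c‖ ^ p + (‖z - c‖ ^ 2 / τ) ^ p)) := by
          rw [mul_pow]; gcongr; exact add_pow_le (norm_nonneg _) (by positivity) p
      _ ≤ (2 / ‖c‖ ^ 2) ^ p * (2 ^ p * (‖z - c‖ ^ p + (‖z - c‖ ^ 2 / τ) ^ p)) := by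
          gcongr; exacts [one_le_two, p.sub_le 1]
      _ = _ := by rw [div_pow _ τ, ← pow_mul, ← mul_assoc, ← mul_pow]; ring_nf
  calc ∫ ω, ‖truncInv τ (E ω) - c⁻¹‖ ^ p ∂μ
      ≤ ∫ ω, (4 / ‖c‖ ^ 2) ^ p * (‖E ω - c‖ ^ p + ‖E ω - c‖ ^ (2 * p) / τ ^ p) ∂μ :=
        integral_mono_of_nonneg (ae_of_all _ fun ω => by positivity)
          ((hi₁.add (hi₂.div_const _)).const_mul _) (ae_of_all _ fun ω => hpt (E ω))
    _ ≤ (4 / ‖c‖ ^ 2) ^ p * (M₁ + M₂ / τ ^ p) := by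
        rw [integral_const_mul, integral_add hi₁ (hi₂.div_const _), integral_div]
        gcongr

end truncInv

theorem stmt_2_general (p : ℕ) (κψ : ℝ) (hκψ : 0 < κψ) :
    ∃ C : ℝ, 0 < C ∧
      ∀ (Ω : Type) [MeasurableSpace Ω] (μ : Measure Ω), IsProbabilityMeasure μ →
      ∀ (n : ℕ) (hn : 0 < n) (Z : Fin n → Ω → ℝ),
        (∀ k, Measurable (Z k)) →
        iIndepFun Z μ →
        (∀ k, μ.map (Z k) = μ.map (Z ⟨0, hn⟩)) →
        ∀ (ψ : ℝ → ℂ),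
          (∀ u : ℝ, ψ u = ∫ ω, Complex.exp (Complex.I * u * Z ⟨0, hn⟩ ω) ∂μ) →
          (∀ u : ℝ, ψ u ≠ 0) →
          ∀ x : ℝ,
            (∫ ω, ‖(if κψ / Real.sqrt n
                      < ‖(n : ℂ)⁻¹ * ∑ k, Complex.exp (Complex.I * x * Z k ω)‖
                    then ((n : ℂ)⁻¹ * ∑ k, Complex.exp (Complex.I * x * Z k ω))⁻¹
                    else 0)
                  - (ψ x)⁻¹‖ ^ (2 * p) ∂μ)
              ≤ C * min ((‖ψ x‖ ^ (2 * p))⁻¹)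
                  (((n : ℝ) ^ p)⁻¹ * (‖ψ x‖ ^ (4 * p))⁻¹) := by
  set M : ℕ → ℝ := fun k => 2 ^ (k + 2) * exp (1 / 2) * (2 * k)!
  set K : ℝ := 4 ^ (2 * p) * (M p + M (2 * p) / κψ ^ (2 * p))
  refine ⟨max (3 ^ (2 * p) * max 1 ((4 * κψ ^ 2) ^ p)) (K * max 1 ((4 * κψ ^ 2) ^ p)⁻¹),
    by positivity, ?_⟩
  intro Ω _ μ _ n hn Z hZ hind hident ψ hψ hψ0 x
  have : NeZero n := ⟨hn.ne'⟩
  have hc (k : Fin n) : ∫ ω, Complex.exp (Complex.I * x * Z k ω) ∂μ = ψ x := by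
    rw [hψ]
    exact (IdentDistrib.mk (hZ k).aemeasurable (hZ _).aemeasurable (hident k)).comp
      (u := fun z : ℝ => Complex.exp (Complex.I * x * z)) (by fun_prop) |>.integral_eq
  have hτ : 0 < κψ / √n := by positivity
  have hregime := le_two_mul_div_sqrt_iff (norm_nonneg (ψ x)) hκψ.le (n.cast_pos.2 hn)
  refine le_mul_min_of_regimes (norm_pos_iff.2 (hψ0 x)) (by positivity) (by positivity)
    (by positivity) (by positivity) (fun h => ?_) (fun h => ?_)
  · exact (integral_norm_truncInv_sub_inv_pow_le_of_le hτ (hψ0 x) (hregime.2 h) _ _).trans_eq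
      (by rw [div_pow, div_eq_mul_inv])
  · refine (integral_norm_truncInv_sub_inv_pow_le_of_two_mul_lt hτ
      (lt_of_not_ge (h.not_ge ∘ hregime.1))
      (integrable_norm_ecf_sub_pow hZ hc _) (integrable_norm_ecf_sub_pow hZ hc _)
      (integral_norm_ecf_sub_pow_le hZ hind hc p)
      (integral_norm_ecf_sub_pow_le hZ hind hc (2 * p))).trans_eq ?_
    rw [div_pow κψ, pow_mul √n, sq_sqrt n.cast_nonneg]
    simp only [K, M]
    field_simp
    ring

/-- Neumann's lemma: for every `p ≥ 1` there is a constant `C` (depending only on `p`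
and the truncation constant `κψ`) such that for every sample size `n`, every i.i.d. sample
and every `x`,
`E[|1/ψ̃(x) - 1/ψ(x)|^{2p}] ≤ C (|ψ(x)|^{-2p} ∧ n^{-p}|ψ(x)|^{-4p})`. -/
theorem stmt_2 (p : ℕ) (hp : 1 ≤ p) (κψ : ℝ) (hκψ : 0 < κψ) :
    ∃ C : ℝ, 0 < C ∧
      ∀ (Ω : Type) [MeasurableSpace Ω] (μ : Measure Ω), IsProbabilityMeasure μ →
      ∀ (n : ℕ) (hn : 0 < n) (Z : Fin n → Ω → ℝ),
        (∀ k, Measurable (Z k)) →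
        iIndepFun Z μ →
        (∀ k, μ.map (Z k) = μ.map (Z ⟨0, hn⟩)) →
        ∀ (ψ : ℝ → ℂ),
          (∀ u : ℝ, ψ u = ∫ ω, Complex.exp (Complex.I * u * Z ⟨0, hn⟩ ω) ∂μ) →
          (∀ u : ℝ, ψ u ≠ 0) →
          ∀ x : ℝ,
            (∫ ω, ‖(if κψ / Real.sqrt n
                      < ‖(n : ℂ)⁻¹ * ∑ k, Complex.exp (Complex.I * x * Z k ω)‖
                    then ((n : ℂ)⁻¹ * ∑ k, Complex.exp (Complex.I * x * Z k ω))⁻¹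
                    else 0)
                  - (ψ x)⁻¹‖ ^ (2 * p) ∂μ)
              ≤ C * min ((‖ψ x‖ ^ (2 * p))⁻¹)
                  (((n : ℝ) ^ p)⁻¹ * (‖ψ x‖ ^ (4 * p))⁻¹) :=
  stmt_2_general p κψ hκψ
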